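/- arXiv:1511.08173 — 5 statements merged into one kernel-verified Lean document; each statement's English description precedes it below -/
import Mathlib

section
/- For every λ > 0, the truncated-Poisson stock-out probability is strictly decreasing in the base-stock position: P(λ, S+1) < P(λ, S) for every S ∈ ℕ. -/
/-- Truncated-Poisson stock-out probability
`P(λ, S) = (λ^S / S!) / (∑_{s=0}^{S} λ^s / s!)`. -/
noncomputable def stockout (lam : ℝ) (S : ℕ) : ℝ :=
  (lam ^ S / (Nat.factorial S : ℝ)) /
    (∑ s ∈ Finset.range (S + 1), lam ^ s / (Nat.factorial s : ℝ))

theorem stmt_2 (lam : ℝ) (hlam : 0 < lam) (S : ℕ) :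
    stockout lam (S + 1) < stockout lam S := by
  set a : ℕ → ℝ := fun s => lam ^ s / (Nat.factorial s : ℝ) with ha
  have hapos : ∀ s, 0 < a s := fun s =>
    div_pos (pow_pos hlam s) (Nat.cast_pos.mpr (Nat.factorial_pos s))
  have hA : ∀ n : ℕ, 0 < ∑ s ∈ Finset.range (n + 1), a s := fun n =>
    Finset.sum_pos (fun i _ => hapos i) ⟨0, Finset.mem_range.mpr (Nat.succ_pos n)⟩
  have hrec : a (S + 1) = lam / (S + 1) * a S := by
    simp only [ha, Nat.factorial_succ]
    push_cast
    field_simp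
    ring
  -- key termwise bound
  have hkey : lam / (S + 1) * ∑ s ∈ Finset.range S, a s ≤ ∑ s ∈ Finset.range S, a (s + 1) := by
    rw [Finset.mul_sum]
    apply Finset.sum_le_sum
    intro s hs
    have hsS : (s:ℝ) + 1 ≤ (S:ℝ) + 1 := by
      exact_mod_cast Nat.succ_le_succ (Finset.mem_range.mp hs).le
    have h1 : (0:ℝ) < (Nat.factorial s : ℝ) := Nat.cast_pos.mpr (Nat.factorial_pos s)
    simp only [ha, Nat.factorial_succ]
    push_cast
    rw [div_mul_div_comm, pow_succ, div_le_div_iff₀ (by positivity) (by positivity)]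
    have hm : ((s:ℝ)+1) * (Nat.factorial s : ℝ) ≤ ((S:ℝ)+1) * (Nat.factorial s : ℝ) :=
      mul_le_mul_of_nonneg_right hsS h1.le
    have := mul_le_mul_of_nonneg_left hm (mul_pos hlam (pow_pos hlam s)).le
    nlinarith [this]
  have hshift : ∑ s ∈ Finset.range S, a (s + 1) = (∑ s ∈ Finset.range (S + 1), a s) - 1 := by
    rw [Finset.sum_range_succ' a S]
    simp [ha]
  unfold stockout
  rw [div_lt_div_iff₀ (hA (S + 1)) (hA S)]
  have hB : ∑ s ∈ Finset.range (S + 2), a s = (∑ s ∈ Finset.range (S + 1), a s) + a (S + 1) :=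
    Finset.sum_range_succ a (S + 1)
  have hAS : ∑ s ∈ Finset.range (S + 1), a s = (∑ s ∈ Finset.range S, a s) + a S :=
    Finset.sum_range_succ a S
  show a (S + 1) * (∑ s ∈ Finset.range (S + 1), a s) < a S * (∑ s ∈ Finset.range (S + 2), a s)
  rw [hB, hAS, hrec]
  have hT : lam / (S + 1) * a S * (∑ s ∈ Finset.range S, a s)
      ≤ a S * ((∑ s ∈ Finset.range (S + 1), a s) - 1) := by
    rw [mul_comm (lam / (S + 1)) (a S), mul_assoc, ← hshift]
    exact mul_le_mul_of_nonneg_left hkey (hapos S).le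
  have h1 : (0:ℝ) < a S := hapos S
  nlinarith [hT, hAS, h1]
end

section
/- For every fixed S ∈ ℕ with S ≥ 1, the truncated-Poisson stock-out probability is strictly increasing in the arrival parameter: if 0 < λ₁ < λ₂ then P(λ₁, S) < P(λ₂, S). Moreover, for every S ∈ ℕ (including S = 0), λ ↦ P(λ, S) is nondecreasing on (0, ∞). -/
private lemma B_pos {lam : ℝ} (h : 0 < lam) (S : ℕ) :
    0 < ∑ s ∈ Finset.range (S + 1), lam ^ s / (Nat.factorial s : ℝ) := by
  apply Finset.sum_pos
  · intro i _
    exact div_pos (pow_pos h i) (by positivity)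
  · exact ⟨0, Finset.mem_range.mpr (Nat.succ_pos S)⟩

private lemma key {l1 l2 : ℝ} (h1 : 0 < l1) (h12 : l1 ≤ l2) {s S : ℕ} (hs : s ≤ S) :
    l1 ^ S * l2 ^ s ≤ l2 ^ S * l1 ^ s := by
  have h2 : 0 < l2 := lt_of_lt_of_le h1 h12
  have hp : l1 ^ (S - s) ≤ l2 ^ (S - s) := pow_le_pow_left₀ h1.le h12 _
  calc l1 ^ S * l2 ^ s = l1 ^ (S - s) * (l1 ^ s * l2 ^ s) := by
        rw [← mul_assoc, ← pow_add, Nat.sub_add_cancel hs]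
    _ ≤ l2 ^ (S - s) * (l1 ^ s * l2 ^ s) := by
        apply mul_le_mul_of_nonneg_right hp; positivity
    _ = l2 ^ S * l1 ^ s := by
        rw [show l2 ^ (S - s) * (l1 ^ s * l2 ^ s) = l2 ^ (S - s) * l2 ^ s * l1 ^ s by ring,
          ← pow_add, Nat.sub_add_cancel hs]

private lemma sum_key_le {l1 l2 : ℝ} (h1 : 0 < l1) (h12 : l1 ≤ l2) (S : ℕ) :
    l1 ^ S * ∑ s ∈ Finset.range (S + 1), l2 ^ s / (Nat.factorial s : ℝ) ≤
      l2 ^ S * ∑ s ∈ Finset.range (S + 1), l1 ^ s / (Nat.factorial s : ℝ) := by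
  rw [Finset.mul_sum, Finset.mul_sum]
  apply Finset.sum_le_sum
  intro i hi
  have hiS : i ≤ S := Nat.lt_succ_iff.mp (Finset.mem_range.mp hi)
  rw [mul_div_assoc', mul_div_assoc']
  exact div_le_div_of_nonneg_right (key h1 h12 hiS) (by positivity)

private lemma sum_key_lt {l1 l2 : ℝ} (h1 : 0 < l1) (h12 : l1 < l2) {S : ℕ} (hS : 1 ≤ S) :
    l1 ^ S * ∑ s ∈ Finset.range (S + 1), l2 ^ s / (Nat.factorial s : ℝ) <
      l2 ^ S * ∑ s ∈ Finset.range (S + 1), l1 ^ s / (Nat.factorial s : ℝ) := by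
  rw [Finset.mul_sum, Finset.mul_sum]
  apply Finset.sum_lt_sum
  · intro i hi
    have hiS : i ≤ S := Nat.lt_succ_iff.mp (Finset.mem_range.mp hi)
    rw [mul_div_assoc', mul_div_assoc']
    exact div_le_div_of_nonneg_right (key h1 h12.le hiS) (by positivity)
  · refine ⟨0, Finset.mem_range.mpr (Nat.succ_pos S), ?_⟩
    simp only [pow_zero, Nat.factorial_zero, Nat.cast_one, div_one, mul_one]
    exact pow_lt_pow_left₀ h12 h1.le (by omega)

theorem stmt_3 :
    (∀ S : ℕ, 1 ≤ S → ∀ lam₁ lam₂ : ℝ, 0 < lam₁ → lam₁ < lam₂ →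
      stockout lam₁ S < stockout lam₂ S) ∧
    (∀ S : ℕ, ∀ lam₁ lam₂ : ℝ, 0 < lam₁ → lam₁ ≤ lam₂ →
      stockout lam₁ S ≤ stockout lam₂ S) := by
  constructor
  · intro S hS lam₁ lam₂ h1 h12
    have h2 : 0 < lam₂ := h1.trans h12
    unfold stockout
    rw [div_lt_div_iff₀ (B_pos h1 S) (B_pos h2 S)]
    rw [div_mul_eq_mul_div, div_mul_eq_mul_div]
    exact div_lt_div_of_pos_right (sum_key_lt h1 h12 hS) (by positivity)
  · intro S lam₁ lam₂ h1 h12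
    have h2 : 0 < lam₂ := lt_of_lt_of_le h1 h12
    unfold stockout
    rw [div_le_div_iff₀ (B_pos h1 S) (B_pos h2 S)]
    rw [div_mul_eq_mul_div, div_mul_eq_mul_div]
    exact div_le_div_of_nonneg_right (sum_key_le h1 h12 S) (by positivity)
end

section
/- Let h > 0, c ≥ 0, λ > 0, and define f : ℕ → ℝ by f(S) := h·S + c·P(λ, S). Then f attains a global minimum over ℕ, and every S* ∈ ℕ satisfying f(S*) ≤ f(S* + 1) and (S* = 0 or f(S*) ≤ f(S* − 1)) is a global minimizer of f over ℕ (i.e., every local minimizer is global). -/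
noncomputable def Qseq (x : ℝ) : ℕ → ℝ
  | 0 => 1
  | n+1 => 1 + ((n : ℝ) + 1) * x * Qseq x n

lemma Qseq_succ (x : ℝ) (n : ℕ) : Qseq x (n+1) = 1 + ((n : ℝ) + 1) * x * Qseq x n := rfl

lemma Qseq_ge_one {x : ℝ} (hx : 0 < x) : ∀ n, 1 ≤ Qseq x n := by
  intro n
  induction n with
  | zero => simp [Qseq]
  | succ k ih =>
    rw [Qseq_succ]
    nlinarith [mul_pos (mul_pos (by positivity : (0:ℝ) < (k:ℝ)+1) hx) (lt_of_lt_of_le one_pos ih)]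

lemma Qseq_pos {x : ℝ} (hx : 0 < x) (n : ℕ) : 0 < Qseq x n :=
  lt_of_lt_of_le one_pos (Qseq_ge_one hx n)

/-- `Den` polynomial -/
noncomputable def Dpoly (x : ℝ) (n : ℕ) : ℝ :=
  ((n:ℝ)+1) - ((n:ℝ)+1)*(2*((n:ℝ)+1)+3)*x + ((n:ℝ)+2)*(((n:ℝ)+3)^2)*x^2

noncomputable def Npoly (x : ℝ) (n : ℕ) : ℝ :=
  ((n:ℝ)+1) - 2*((n:ℝ)+1)*(((n:ℝ)+2))*x + ((n:ℝ)+1)*(((n:ℝ)+3)^2)*x^2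

noncomputable def Kexpr (x : ℝ) (n : ℕ) : ℝ :=
  (1+((n:ℝ)+2)*x)*(Qseq x (n+1))^2
    - (1+((n:ℝ)+1)*x+2*((n:ℝ)+2)*x)*(Qseq x (n+1))*(Qseq x n)
    + 2*((n:ℝ)+1)*x*(Qseq x n)^2

lemma Dpoly_pos {x : ℝ} (hx : 0 < x) (n : ℕ) : 0 < Dpoly x n := by
  have hn : (0:ℝ) ≤ (n:ℝ) := Nat.cast_nonneg n
  unfold Dpoly
  have hC : (0:ℝ) < 4*((n:ℝ)+2)*((n:ℝ)+3)^2 := by positivity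
  have hc2 : (0:ℝ) < ((n:ℝ)+1)*(8*(n:ℝ)^2+39*(n:ℝ)+47) := by positivity
  nlinarith [sq_nonneg (2*((n:ℝ)+2)*(((n:ℝ)+3)^2)*x - ((n:ℝ)+1)*(2*((n:ℝ)+1)+3)), hC, hc2]

lemma Npoly_pos {x : ℝ} (hx : 0 < x) (n : ℕ) : 0 < Npoly x n := by
  have hn : (0:ℝ) ≤ (n:ℝ) := Nat.cast_nonneg n
  unfold Npoly
  have hinner : (0:ℝ) < 1 - 2*((n:ℝ)+2)*x + ((n:ℝ)+3)^2*x^2 := by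
    have hC : (0:ℝ) < ((n:ℝ)+3)^2 := by positivity
    nlinarith [sq_nonneg ((((n:ℝ)+3)^2)*x - ((n:ℝ)+2)), hC]
  have h1 : (0:ℝ) < (n:ℝ)+1 := by positivity
  nlinarith [mul_pos h1 hinner]

lemma P3_identity (x : ℝ) (n : ℕ) :
    Dpoly x (n+1) * (Npoly x n - ((n:ℝ)+1)*x*Dpoly x n)
      - Npoly x n * (Npoly x (n+1) - ((n:ℝ)+2)*x*Dpoly x (n+1))
    = 2*((n:ℝ)+1)*x^2*(2 + 3*x + ((n:ℝ)+1)*x) := by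
  simp only [Dpoly, Npoly]
  push_cast
  ring

lemma main_ind {x : ℝ} (hx : 0 < x) :
    ∀ n, 0 ≤ Kexpr x n ∧ Npoly x n * Qseq x n ≤ Dpoly x n * Qseq x (n+1) := by
  intro n
  induction n with
  | zero =>
    constructor
    · show (0:ℝ) ≤ _
      simp only [Kexpr, Qseq]
      push_cast
      nlinarith [hx, sq_nonneg x]
    · simp only [Npoly, Dpoly, Qseq]
      push_cast
      nlinarith [hx, sq_nonneg x, mul_pos (mul_pos hx hx) hx]
  | succ n ih =>
    obtain ⟨hK, hQ⟩ := ih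
    have e1 : Qseq x (n+1) = 1 + ((n:ℝ)+1)*x*Qseq x n := Qseq_succ x n
    have e2 : Qseq x (n+2) = 1 + ((n:ℝ)+2)*x*Qseq x (n+1) := by
      rw [Qseq_succ]; push_cast; ring
    have hQ1pos : 0 < Qseq x (n+1) := Qseq_pos hx (n+1)
    have hQ0pos : 0 < Qseq x n := Qseq_pos hx n
    have hDpos := Dpoly_pos hx n
    have hNpos := Npoly_pos hx n
    have hD'pos := Dpoly_pos hx (n+1)
    have hN'pos := Npoly_pos hx (n+1)
    constructor
    · have idK : Kexpr x (n+1)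
          = (((n:ℝ)+1)*x*(1+((n:ℝ)+3)*x)/2) * Kexpr x n
            + (x/2) * (Qseq x (n+1))
              * (Dpoly x n * Qseq x (n+1) - Npoly x n * Qseq x n) := by
        simp only [Kexpr, Dpoly, Npoly]
        rw [e2, e1]
        push_cast
        ring
      rw [idK]
      have hα : 0 ≤ ((n:ℝ)+1)*x*(1+((n:ℝ)+3)*x)/2 := by positivity
      have hrem : 0 ≤ Dpoly x n * Qseq x (n+1) - Npoly x n * Qseq x n :=
        sub_nonneg.mpr hQ
      have : 0 ≤ (x/2) * (Qseq x (n+1)) := by positivity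
      exact add_nonneg (mul_nonneg hα hK) (mul_nonneg this hrem)
    · -- goal : Npoly x (n+1) * Qseq x (n+1) ≤ Dpoly x (n+1) * Qseq x (n+2)
      have b1 : (Npoly x n - ((n:ℝ)+1)*x*Dpoly x n) * Qseq x (n+1) ≤ Npoly x n := by
        have hax : (0:ℝ) ≤ ((n:ℝ)+1)*x := by positivity
        have h2 := mul_le_mul_of_nonneg_left hQ hax
        rw [e1] at h2 ⊢
        nlinarith [h2]
      have hP3 := P3_identity x n
      have hP3pos : 0 ≤ 2*((n:ℝ)+1)*x^2*(2 + 3*x + ((n:ℝ)+1)*x) := by positivity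
      by_cases hs : Npoly x (n+1) - ((n:ℝ)+2)*x*Dpoly x (n+1) ≤ 0
      · have t : (Npoly x (n+1) - ((n:ℝ)+2)*x*Dpoly x (n+1)) * Qseq x (n+1) ≤ 0 :=
          mul_nonpos_of_nonpos_of_nonneg hs hQ1pos.le
        rw [e2]
        nlinarith [t, hD'pos]
      · push_neg at hs
        have hnd : 0 < Npoly x n - ((n:ℝ)+1)*x*Dpoly x n := by
          by_contra hcon
          push_neg at hcon
          nlinarith [mul_pos hNpos hs, mul_nonpos_of_nonneg_of_nonpos hD'pos.le hcon]
        have c1 : (Npoly x (n+1) - ((n:ℝ)+2)*x*Dpoly x (n+1))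
              * ((Npoly x n - ((n:ℝ)+1)*x*Dpoly x n) * Qseq x (n+1))
            ≤ (Npoly x (n+1) - ((n:ℝ)+2)*x*Dpoly x (n+1)) * Npoly x n :=
          mul_le_mul_of_nonneg_left b1 hs.le
        have c2 : Npoly x n * (Npoly x (n+1) - ((n:ℝ)+2)*x*Dpoly x (n+1))
            ≤ Dpoly x (n+1) * (Npoly x n - ((n:ℝ)+1)*x*Dpoly x n) := by
          nlinarith [hP3, hP3pos]
        have c3 : (Npoly x (n+1) - ((n:ℝ)+2)*x*Dpoly x (n+1)) * Qseq x (n+1)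
              * (Npoly x n - ((n:ℝ)+1)*x*Dpoly x n)
            ≤ Dpoly x (n+1) * (Npoly x n - ((n:ℝ)+1)*x*Dpoly x n) := by
          nlinarith [c1, c2]
        have c4 : (Npoly x (n+1) - ((n:ℝ)+2)*x*Dpoly x (n+1)) * Qseq x (n+1)
            ≤ Dpoly x (n+1) := le_of_mul_le_mul_right c3 hnd
        rw [e2]
        nlinarith [c4]

lemma sum_eq {lam : ℝ} (hlam : 0 < lam) (n : ℕ) :
    ∑ s ∈ Finset.range (n+1), lam^s / (Nat.factorial s : ℝ)
      = lam^n / (Nat.factorial n : ℝ) * Qseq (1/lam) n := by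
  induction n with
  | zero => simp [Qseq]
  | succ n ih =>
    rw [Finset.sum_range_succ, ih, Qseq_succ]
    have h1 : (Nat.factorial (n+1) : ℝ) = ((n:ℝ)+1) * (Nat.factorial n : ℝ) := by
      push_cast [Nat.factorial_succ]; ring
    have hf : (Nat.factorial n : ℝ) ≠ 0 := by
      exact_mod_cast (Nat.factorial_ne_zero n)
    have hl : lam ≠ 0 := ne_of_gt hlam
    rw [h1, pow_succ]
    field_simp
    ring

lemma stockout_eq {lam : ℝ} (hlam : 0 < lam) (n : ℕ) :
    stockout lam n = 1 / Qseq (1/lam) n := by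
  have hx : 0 < 1/lam := by positivity
  have hQ : Qseq (1/lam) n ≠ 0 := ne_of_gt (Qseq_pos hx n)
  have ha : lam^n / (Nat.factorial n : ℝ) ≠ 0 := by positivity
  unfold stockout
  rw [sum_eq hlam n, div_mul_cancel_left₀ ha]
  exact (one_div _).symm

lemma stockout_convex {lam : ℝ} (hlam : 0 < lam) (n : ℕ) :
    0 ≤ stockout lam n + stockout lam (n+2) - 2 * stockout lam (n+1) := by
  have hx : 0 < 1/lam := by positivity
  set x := 1/lam with hxdef
  have h0 := Qseq_pos hx n
  have h1 := Qseq_pos hx (n+1)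
  have h2 := Qseq_pos hx (n+2)
  have hE : Qseq x (n+1) * Qseq x (n+2) + Qseq x n * Qseq x (n+1)
        - 2 * Qseq x n * Qseq x (n+2) = Kexpr x n := by
    have e1 : Qseq x (n+1) = 1 + ((n:ℝ)+1)*x*Qseq x n := Qseq_succ x n
    have e2 : Qseq x (n+2) = 1 + ((n:ℝ)+2)*x*Qseq x (n+1) := by
      rw [Qseq_succ]; push_cast; ring
    simp only [Kexpr]
    rw [e2, e1]
    ring
  have hK := (main_ind hx n).1
  rw [stockout_eq hlam n, stockout_eq hlam (n+1), stockout_eq hlam (n+2)]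
  rw [show (1:ℝ)/Qseq x n + 1/Qseq x (n+2) - 2 * (1/Qseq x (n+1))
      = (Qseq x (n+1) * Qseq x (n+2) + Qseq x n * Qseq x (n+1)
        - 2 * Qseq x n * Qseq x (n+2)) / (Qseq x n * Qseq x (n+1) * Qseq x (n+2)) by
    field_simp]
  rw [hE]
  exact div_nonneg hK (le_of_lt (mul_pos (mul_pos h0 h1) h2))

lemma stockout_nonneg {lam : ℝ} (hlam : 0 < lam) (n : ℕ) : 0 ≤ stockout lam n := by
  have hx : 0 < 1/lam := by positivity
  rw [stockout_eq hlam n]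
  exact le_of_lt (div_pos one_pos (Qseq_pos hx n))

theorem stmt_6 (h c lam : ℝ) (hh : 0 < h) (hc : 0 ≤ c) (hlam : 0 < lam)
    (f : ℕ → ℝ) (hf : ∀ S : ℕ, f S = h * S + c * stockout lam S) :
    (∃ S₀ : ℕ, ∀ S : ℕ, f S₀ ≤ f S) ∧
    (∀ Sstar : ℕ, f Sstar ≤ f (Sstar + 1) →
      (Sstar = 0 ∨ f Sstar ≤ f (Sstar - 1)) →
      ∀ S : ℕ, f Sstar ≤ f S) := by
  -- difference sequence and its monotonicity (discrete convexity of f)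
  set d : ℕ → ℝ := fun n => f (n+1) - f n with hd
  have hstep : ∀ n, d n ≤ d (n+1) := by
    intro n
    have hconv := stockout_convex hlam n
    have := mul_nonneg hc hconv
    simp only [hd]
    rw [hf n, hf (n+1), hf (n+2)]
    push_cast
    nlinarith [this]
  have dmono : Monotone d := monotone_nat_of_le_succ hstep
  -- lower bound f S ≥ h S
  have hlb : ∀ S : ℕ, h * S ≤ f S := by
    intro S
    rw [hf S]
    nlinarith [mul_nonneg hc (stockout_nonneg hlam S)]
  -- part 2 : local minimizers are global
  have part2 : ∀ Sstar : ℕ, f Sstar ≤ f (Sstar + 1) →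
      (Sstar = 0 ∨ f Sstar ≤ f (Sstar - 1)) →
      ∀ S : ℕ, f Sstar ≤ f S := by
    intro T hup hdown S
    have hdT : 0 ≤ d T := by simp only [hd]; linarith
    rcases le_or_gt T S with hTS | hST
    · -- upward
      have : ∀ m, T ≤ m → f T ≤ f m := by
        intro m hm
        induction m, hm using Nat.le_induction with
        | base => exact le_refl _
        | succ k hk ih =>
          have h2 : 0 ≤ d k := le_trans hdT (dmono hk)
          simp only [hd] at h2
          linarith
      exact this S hTS
    · -- downward
      have hT0 : T ≠ 0 := by omega
      have hdownT : f T ≤ f (T-1) := by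
        rcases hdown with h0 | hle
        · exact absurd h0 hT0
        · exact hle
      have hdT1 : d (T-1) ≤ 0 := by
        simp only [hd]
        have : T - 1 + 1 = T := by omega
        rw [this]
        linarith
      -- show ∀ m ≤ T, f T ≤ f (T - m), by induction on m
      have key : ∀ m, m ≤ T → f T ≤ f (T - m) := by
        intro m
        induction m with
        | zero => intro _; simp
        | succ k ih =>
          intro hk
          have hkT : k ≤ T := by omega
          have h1 : f T ≤ f (T - k) := ih hkT
          have hsub : T - k = (T - (k+1)) + 1 := by omega
          have h2 : d (T - (k+1)) ≤ 0 := by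
            have : T - (k+1) ≤ T - 1 := by omega
            exact le_trans (dmono this) hdT1
          simp only [hd] at h2
          rw [hsub] at h1
          linarith
      have := key (T - S) (by omega)
      have hts : T - (T - S) = S := by omega
      rwa [hts] at this
  refine ⟨?_, part2⟩
  -- existence of a global minimizer
  set N : ℕ := Nat.ceil (f 0 / h) with hN
  have hfin : (Finset.range (N+1)).Nonempty := ⟨0, Finset.mem_range.mpr (by omega)⟩
  obtain ⟨S₀, hS₀mem, hmin⟩ := Finset.exists_min_image (Finset.range (N+1)) f hfin
  refine ⟨S₀, fun S => ?_⟩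
  rcases le_or_gt S N with hSN | hNS
  · exact hmin S (Finset.mem_range.mpr (by omega))
  · have h1 : f S₀ ≤ f 0 := hmin 0 (Finset.mem_range.mpr (by omega))
    have h2 : f 0 ≤ h * N := by
      have := Nat.le_ceil (f 0 / h)
      rw [← hN] at this
      calc f 0 = h * (f 0 / h) := by field_simp
      _ ≤ h * N := by
        apply mul_le_mul_of_nonneg_left _ hh.le
        exact_mod_cast this
    have h3 : h * (N:ℝ) ≤ h * S := by
      apply mul_le_mul_of_nonneg_left _ hh.le
      exact_mod_cast Nat.le_of_lt hNS
    linarith [hlb S]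
end

section
/- Let q ∈ (0,1), d > 0, w > 0, and let r_a, r_b, e, P_a, P_b be real numbers with r_b ≤ r_a ≤ e, P_b ≤ P_a, and P_b ≤ 1. Then the expected per-unit service cost with the cheaper regular supplier assigned to the earlier (more likely used) level is no larger than with the reverse order: w·[r_b·(1 − P_b) + e·P_b] + w·q·[r_a·(1 − P_a) + e·P_a] ≤ w·[r_a·(1 − P_a) + e·P_a] + w·q·[r_b·(1 − P_b) + e·P_b]. Equivalently, the difference between the two sides equals w·(1 − q)·[(r_a − r_b)·(1 − P_b) + (e − r_a)·(P_a − P_b)] ≥ 0. -/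
theorem stmt_7 (q d w rₐ r_b e Pₐ P_b : ℝ)
    (hq0 : 0 < q) (hq1 : q < 1) (hd : 0 < d) (hw : 0 < w)
    (hr : r_b ≤ rₐ) (hre : rₐ ≤ e) (hP : P_b ≤ Pₐ) (hPb : P_b ≤ 1) :
    w * (r_b * (1 - P_b) + e * P_b) + w * q * (rₐ * (1 - Pₐ) + e * Pₐ) ≤
      w * (rₐ * (1 - Pₐ) + e * Pₐ) + w * q * (r_b * (1 - P_b) + e * P_b) ∧
    (w * (rₐ * (1 - Pₐ) + e * Pₐ) + w * q * (r_b * (1 - P_b) + e * P_b)) -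
        (w * (r_b * (1 - P_b) + e * P_b) + w * q * (rₐ * (1 - Pₐ) + e * Pₐ)) =
      w * (1 - q) * ((rₐ - r_b) * (1 - P_b) + (e - rₐ) * (Pₐ - P_b)) ∧
    0 ≤ w * (1 - q) * ((rₐ - r_b) * (1 - P_b) + (e - rₐ) * (Pₐ - P_b)) := by
  have hpos : 0 ≤ w * (1 - q) * ((rₐ - r_b) * (1 - P_b) + (e - rₐ) * (Pₐ - P_b)) := by
    apply mul_nonneg (mul_nonneg hw.le (by linarith))
    have := mul_nonneg (by linarith : (0:ℝ) ≤ rₐ - r_b) (by linarith : (0:ℝ) ≤ 1 - P_b)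
    have := mul_nonneg (by linarith : (0:ℝ) ≤ e - rₐ) (by linarith : (0:ℝ) ≤ Pₐ - P_b)
    linarith
  refine ⟨by nlinarith [hpos], by ring, hpos⟩
end

section
/- Assume r and t are compatible (r_i ≤ r_{i''} ⇔ t_i ≤ t_{i''} for all i, i'' ∈ Ī) and e_{i'} ≥ r_i for all i ∈ Ī. Fix the expedited supplier i' ∈ Ī and base stock S ∈ {0,…,S̄}. If k' : {1,…,L} → Ī is a rearrangement of an injective level map k (i.e., k' = k ∘ σ for a permutation σ of {1,…,L}) such that the regular costs r_{k'(1)} ≤ r_{k'(2)} ≤ … ≤ r_{k'(L)} are nondecreasing along levels, then C̄(k', i', S) ≤ C̄(k, i', S). Hence sorting a terminal's assigned regular suppliers by increasing regular shipment cost never increases the expected cost. -/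
/-- Expected operational cost `C̄(k, i', S)` of assigning the injective level map `k`
of regular suppliers, expedited supplier `i'`, and base stock `S`:
`C̄(k,i',S) = h·S + d·∑_{l=1}^{L} (1−q)·q^{l−1}·[ r_{k(l)}·(1 − P(d·t_{k(l)}, S))
 + e_{i'}·P(d·t_{k(l)}, S) ] + d·e_{i'}·q^L`. -/
noncomputable def Cbar {ι : Type*} [Fintype ι] (r t e : ι → ℝ) (d q h : ℝ) (L : ℕ)
    (k : Fin L → ι) (i' : ι) (S : ℕ) : ℝ :=
  h * S +
    d * ∑ l : Fin L, (1 - q) * q ^ (l : ℕ) *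
      (r (k l) * (1 - stockout (d * t (k l)) S) + e i' * stockout (d * t (k l)) S) +
    d * e i' * q ^ L

open Finset

lemma stockout_denom_pos {lam : ℝ} (hlam : 0 ≤ lam) (S : ℕ) :
    0 < ∑ s ∈ range (S + 1), lam ^ s / (s.factorial : ℝ) :=
  sum_pos' (fun s _ => by positivity) ⟨0, mem_range.2 S.succ_pos, by simp⟩

lemma stockout_le_one {lam : ℝ} (hlam : 0 ≤ lam) (S : ℕ) : stockout lam S ≤ 1 :=
  (div_le_one (stockout_denom_pos hlam S)).2 <|
    single_le_sum (f := fun s => lam ^ s / (s.factorial : ℝ))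
      (fun s _ => by positivity) (mem_range.2 S.lt_succ_self)

lemma pow_mul_pow_le_pow_mul_pow {a b : ℝ} (ha : 0 ≤ a) (hab : a ≤ b) {s n : ℕ} (hsn : s ≤ n) :
    a ^ n * b ^ s ≤ b ^ n * a ^ s := by
  obtain ⟨m, rfl⟩ := Nat.exists_eq_add_of_le hsn
  have hb : 0 ≤ b := ha.trans hab
  calc a ^ (s + m) * b ^ s = a ^ m * (a ^ s * b ^ s) := by ring
    _ ≤ b ^ m * (a ^ s * b ^ s) := by gcongr
    _ = b ^ (s + m) * a ^ s := by ring

lemma stockout_mono {lam mu : ℝ} (hlam : 0 ≤ lam) (hlm : lam ≤ mu) (S : ℕ) :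
    stockout lam S ≤ stockout mu S := by
  unfold stockout
  rw [div_le_div_iff₀ (stockout_denom_pos hlam S) (stockout_denom_pos (hlam.trans hlm) S),
    mul_sum, mul_sum]
  refine sum_le_sum fun s hs => ?_
  rw [div_mul_div_comm, div_mul_div_comm]
  gcongr ?_ / _
  exact pow_mul_pow_le_pow_mul_pow hlam hlm (Nat.lt_succ_iff.1 (mem_range.1 hs))

lemma mul_one_sub_add_mul_le {a a' c p p' : ℝ} (ha : a ≤ a') (hac : a ≤ c) (hp : p ≤ p')
    (hp' : p' ≤ 1) : a * (1 - p) + c * p ≤ a' * (1 - p') + c * p' := by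
  nlinarith [mul_nonneg (sub_nonneg.2 ha) (sub_nonneg.2 hp'),
    mul_nonneg (sub_nonneg.2 hac) (sub_nonneg.2 hp)]

section LevelCost

variable {ι : Type*} (r t e : ι → ℝ) (d : ℝ) (i' : ι) (S : ℕ)

/-- The bracketed per-level term of `C̄`, for a level served by `i`. -/
noncomputable def levelCost (i : ι) : ℝ :=
  r i * (1 - stockout (d * t i) S) + e i' * stockout (d * t i) S

variable {r t e d i' S}

lemma levelCost_le_levelCost {i j : ι} (hd : 0 ≤ d) (hti : 0 ≤ t i) (hr : r i ≤ r j)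
    (ht : t i ≤ t j) (he : r i ≤ e i') : levelCost r t e d i' S i ≤ levelCost r t e d i' S j :=
  mul_one_sub_add_mul_le hr he (stockout_mono (mul_nonneg hd hti) (by gcongr) S)
    (stockout_le_one (mul_nonneg hd (hti.trans ht)) S)

end LevelCost

theorem stmt_10_general {ι : Type*} [Fintype ι]
    (r t e : ι → ℝ) (d q h : ℝ) (L : ℕ)
    (hd : 0 < d) (hq0 : 0 < q) (hq1 : q < 1) (ht : ∀ i, 0 < t i)
    (hcompat : ∀ i i'' : ι, r i ≤ r i'' ↔ t i ≤ t i'')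
    (i' : ι) (he : ∀ i : ι, r i ≤ e i')
    (k : Fin L → ι)
    (σ : Equiv.Perm (Fin L)) (k' : Fin L → ι) (hk' : k' = k ∘ σ)
    (hsorted : Monotone fun l : Fin L => r (k' l))
    (S : ℕ) :
    Cbar r t e d q h L k' i' S ≤ Cbar r t e d q h L k i' S := by
  subst hk'
  have hweight : Antitone fun l : Fin L => (1 - q) * q ^ (l : ℕ) := fun l m hlm =>
    mul_le_mul_of_nonneg_left (pow_le_pow_of_le_one hq0.le hq1.le hlm) (by linarith)
  have hcost : Monotone fun l => levelCost r t e d i' S (k (σ l)) := fun l m hlm =>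
    levelCost_le_levelCost hd.le (ht _).le (hsorted hlm) ((hcompat _ _).1 (hsorted hlm)) (he _)
  have hrearr := (hweight.antivary hcost).sum_mul_le_sum_mul_comp_perm (σ := σ⁻¹)
  simp only [Equiv.Perm.coe_inv, Equiv.apply_symm_apply] at hrearr
  unfold Cbar
  gcongr _ + d * ?_ + _
  exact hrearr

theorem stmt_10 {ι : Type*} [Fintype ι] [Nonempty ι]
    (r t e : ι → ℝ) (d q h : ℝ) (L Sbar : ℕ)
    (hd : 0 < d) (hq0 : 0 < q) (hq1 : q < 1) (hh : 0 ≤ h) (hL : 1 ≤ L)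
    (hcard : L ≤ Fintype.card ι) (ht : ∀ i, 0 < t i)
    (hcompat : ∀ i i'' : ι, r i ≤ r i'' ↔ t i ≤ t i'')
    (i' : ι) (he : ∀ i : ι, r i ≤ e i')
    (k : Fin L → ι) (hk : Function.Injective k)
    (σ : Equiv.Perm (Fin L)) (k' : Fin L → ι) (hk' : k' = k ∘ σ)
    (hsorted : Monotone fun l : Fin L => r (k' l))
    (S : ℕ) (hS : S ≤ Sbar) :
    Cbar r t e d q h L k' i' S ≤ Cbar r t e d q h L k i' S :=
  stmt_10_general r t e d q h L hd hq0 hq1 ht hcompat i' he k σ k' hk' hsorted S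
end
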